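/- Vizing's Adjacency Lemma: Let G be a Class 2 graph with maximum degree Δ and let e = xy be a critical edge of G (i.e., χ'(G − e) < χ'(G)). Then x has at least Δ − d_G(y) + 1 neighbors of degree Δ in V(G) \ {y}. -/

import Mathlib

/-!
Fix a proper `Δ`-edge-coloring `c` of `G - xy`; a color is missing at `v` if no edge at `v` has it.
A fan chain is a sequence `z_t, …, z_1, z_0 = y` of neighbors of `x` such that `c(x z_{i+1})` is
missing at `z_i`. Since `G` is not `Δ`-colorable, shifting colors down a fan chain shows that no
color missing at `x` is missing at a vertex of a fan chain, and a Kempe-chain argument shows that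
distinct such vertices miss disjoint sets of colors. So every color missing at a fan vertex is the
color of an edge from `x` to a fan vertex other than `y`, and there are at least as many such
vertices as missing colors at fan vertices. At least `Δ - d(y) + 1` colors are missing at `y` and
at least one at every fan vertex of degree less than `Δ`, which leaves `Δ - d(y) + 1` fan vertices
of degree `Δ`.
-/

open SimpleGraph

/-- A proper `k`-edge-coloring of `G` with colors in `{1,…,k}`: every edge receives a color
in `{1,…,k}` and distinct edges sharing a vertex receive distinct colors. -/
def IsProperEdgeColoring {V : Type*} (G : SimpleGraph V) (k : ℕ) (c : Sym2 V → ℕ) : Prop :=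
  (∀ e ∈ G.edgeSet, c e ∈ Finset.Icc 1 k) ∧
  ∀ e ∈ G.edgeSet, ∀ f ∈ G.edgeSet, e ≠ f → (∃ v, v ∈ e ∧ v ∈ f) → c e ≠ c f

/-- `G` admits a proper `k`-edge-coloring. -/
def EdgeColorable {V : Type*} (G : SimpleGraph V) (k : ℕ) : Prop :=
  ∃ c, IsProperEdgeColoring G k c

/-- The chromatic index of `G`: the least `k` such that `G` is `k`-edge-colorable. -/
noncomputable def chromIndex {V : Type*} (G : SimpleGraph V) : ℕ :=
  sInf {k | EdgeColorable G k}

section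

open Finset

variable {V : Type*}

theorem Finset.le_card_filter_of_add_sum_le {ι : Type*} {s : Finset ι} {m : ι → ℕ} {p : ι → Prop}
    [DecidablePred p] {r : ℕ} (h : r + ∑ i ∈ s, m i ≤ #s) (hm : ∀ i ∈ s, ¬p i → 1 ≤ m i) :
    r ≤ #(s.filter p) := by
  have hneg : #(s.filter (¬p ·)) ≤ ∑ i ∈ s, m i := calc
    #(s.filter (¬p ·)) = ∑ i ∈ s.filter (¬p ·), 1 := card_eq_sum_ones _
    _ ≤ ∑ i ∈ s.filter (¬p ·), m i :=
      sum_le_sum fun i hi => hm i (mem_filter.1 hi).1 (mem_filter.1 hi).2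
    _ ≤ ∑ i ∈ s, m i := sum_le_sum_of_subset (filter_subset _ _)
  have := card_filter_add_card_filter_not (s := s) p
  omega

theorem Equiv.swap_apply_mem_iff {ι : Type*} [DecidableEq ι] {s : Finset ι} {a b i : ι}
    (ha : a ∈ s) (hb : b ∈ s) : Equiv.swap a b i ∈ s ↔ i ∈ s := by
  rcases eq_or_ne i a with rfl | hia
  · simp [ha, hb]
  rcases eq_or_ne i b with rfl | hib
  · simp [ha, hb]
  rw [Equiv.swap_apply_of_ne_of_ne hia hib]

namespace SimpleGraph

variable {G : SimpleGraph V} {e : Sym2 V} {w : V}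

theorem degree_deleteEdges_singleton_lt [Fintype (G.neighborSet w)]
    [Fintype ((G.deleteEdges {e}).neighborSet w)] (he : e ∈ G.edgeSet) (hw : w ∈ e) :
    (G.deleteEdges {e}).degree w < G.degree w := by
  obtain ⟨v, rfl⟩ := Sym2.mem_iff_exists.1 hw
  simp_rw [← card_neighborFinset_eq_degree]
  refine card_lt_card ⟨fun a => ?_, fun h => ?_⟩
  · simp only [mem_neighborFinset, deleteEdges_adj]
    exact And.left
  · simpa using h ((mem_neighborFinset ..).2 he)

theorem le_deleteEdges_sup_edge (G : SimpleGraph V) (x y : V) :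
    G ≤ G.deleteEdges {s(x, y)} ⊔ edge x y :=
  le_sdiff_sup

theorem Reachable.eq_or_eq_or_eq_of_degree_le_one [Fintype V] [DecidableRel G.Adj]
    (hdeg : ∀ v, G.degree v ≤ 2) {a b d : V} (ha : G.degree a ≤ 1) (hb : G.degree b ≤ 1)
    (hd : G.degree d ≤ 1) (hab : G.Reachable a b) (had : G.Reachable a d) :
    a = b ∨ a = d ∨ b = d := by
  classical
  -- The component of `a` has at least `n - 1` edges but degree sum at most `2 n - 3`.
  by_contra! hne
  set C := G.connectedComponentMk a
  set K := G.induce C.supp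
  have hmem : ∀ {v}, G.Reachable a v → v ∈ C.supp := fun h =>
    (ConnectedComponent.mem_supp_iff _ _).2 (ConnectedComponent.sound h.symm)
  have hdegK (v : C.supp) : K.degree v = G.degree v :=
    degree_induce_of_neighborSet_subset fun w hw => (C.mem_supp_congr_adj hw).1 v.2
  let T : Finset C.supp := {⟨a, hmem .rfl⟩, ⟨b, hmem hab⟩, ⟨d, hmem had⟩}
  have hT : #T = 3 := by
    simp [T, card_insert_of_notMem, hne.1, hne.2.1, hne.2.2]
  have hsum : ∑ v, K.degree v + #T ≤ 2 * Fintype.card C.supp := calc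
    ∑ v, K.degree v + #T = ∑ v, (K.degree v + if v ∈ T then 1 else 0) := by
      rw [sum_add_distrib, sum_ite_mem, univ_inter, sum_const, smul_eq_mul, mul_one]
    _ ≤ ∑ _v : C.supp, 2 := sum_le_sum fun v _ => by
      rw [hdegK]
      split_ifs with hv
      · simp only [T, mem_insert, mem_singleton] at hv
        have : G.degree v ≤ 1 := by rcases hv with rfl | rfl | rfl <;> assumption
        omega
      · exact (hdeg v).trans (by omega)
    _ = 2 * Fintype.card C.supp := by simp [mul_comm]
  have hconn : K.Connected := C.connected_toSimpleGraph
  have hcard := hconn.card_vert_le_card_edgeSet_add_one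
  rw [Nat.card_eq_fintype_card, Nat.card_eq_fintype_card, ← edgeFinset_card] at hcard
  have := K.sum_degrees_eq_twice_card_edges
  omega

end SimpleGraph

section EdgeColoring

variable {G H : SimpleGraph V} {k : ℕ} {c c' : Sym2 V → ℕ} {x u w : V} {α γ : ℕ}

theorem isProperEdgeColoring_iff :
    IsProperEdgeColoring G k c ↔ (∀ a b, G.Adj a b → c s(a, b) ∈ Icc 1 k) ∧
      ∀ w a b, G.Adj w a → G.Adj w b → a ≠ b → c s(w, a) ≠ c s(w, b) := by
  refine ⟨fun ⟨hrange, hne⟩ => ⟨fun a b h => hrange _ h, fun w a b ha hb hab =>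
    hne _ ha _ hb (mt Sym2.congr_right.1 hab) ⟨w, Sym2.mem_mk_left _ _, Sym2.mem_mk_left _ _⟩⟩,
    fun ⟨hrange, hne⟩ => ⟨fun e he => ?_, fun e he f hf hef ⟨w, hwe, hwf⟩ => ?_⟩⟩
  · induction e using Sym2.ind with
    | _ a b => exact hrange a b he
  · obtain ⟨a, rfl⟩ := Sym2.mem_iff_exists.1 hwe
    obtain ⟨b, rfl⟩ := Sym2.mem_iff_exists.1 hwf
    exact hne w a b he hf (by rintro rfl; exact hef rfl)

theorem IsProperEdgeColoring.mem_Icc (hc : IsProperEdgeColoring G k c) {a b : V}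
    (h : G.Adj a b) : c s(a, b) ∈ Icc 1 k :=
  (isProperEdgeColoring_iff.1 hc).1 a b h

theorem IsProperEdgeColoring.ne_of_adj (hc : IsProperEdgeColoring G k c) {a b : V}
    (ha : G.Adj w a) (hb : G.Adj w b) (hab : a ≠ b) : c s(w, a) ≠ c s(w, b) :=
  (isProperEdgeColoring_iff.1 hc).2 w a b ha hb hab

theorem EdgeColorable.anti (h : EdgeColorable G k) (hle : H ≤ G) : EdgeColorable H k :=
  let ⟨c, hrange, hne⟩ := h
  ⟨c, fun e he => hrange e (edgeSet_mono hle he),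
    fun e he f hf => hne e (edgeSet_mono hle he) f (edgeSet_mono hle hf)⟩

theorem EdgeColorable.mono (h : EdgeColorable G k) {m : ℕ} (hkm : k ≤ m) : EdgeColorable G m :=
  let ⟨c, hrange, hne⟩ := h
  ⟨c, fun e he => Icc_subset_Icc_right hkm (hrange e he), hne⟩

theorem edgeColorable_chromIndex [Finite V] (G : SimpleGraph V) :
    EdgeColorable G (chromIndex G) := by
  have h : EdgeColorable G (Nat.card (Sym2 V)) :=
    ⟨fun e => Finite.equivFin (Sym2 V) e + 1, fun e _ => by simp, fun e _ f _ hef _ h =>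
      hef ((Finite.equivFin (Sym2 V)).injective (Fin.ext (Nat.add_right_cancel h)))⟩
  exact Nat.sInf_mem (s := {k | EdgeColorable G k}) ⟨_, h⟩

theorem chromIndex_le (h : EdgeColorable G k) : chromIndex G ≤ k :=
  Nat.sInf_le h

open Classical in
noncomputable def missingColors (G : SimpleGraph V) (k : ℕ) (c : Sym2 V → ℕ) (w : V) :
    Finset ℕ :=
  (Icc 1 k).filter fun γ => ∀ v, G.Adj w v → c s(w, v) ≠ γ

theorem mem_missingColors :
    γ ∈ missingColors G k c w ↔ γ ∈ Icc 1 k ∧ ∀ v, G.Adj w v → c s(w, v) ≠ γ := by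
  classical
  simp only [missingColors, mem_filter]

theorem missingColors_congr (h : ∀ v, c' s(w, v) = c s(w, v)) :
    missingColors G k c' w = missingColors G k c w := by
  ext γ
  simp only [mem_missingColors, h]

theorem le_card_missingColors_add_degree [Fintype (G.neighborSet w)] :
    k ≤ #(missingColors G k c w) + G.degree w := by
  classical
  have hsub : Icc 1 k ⊆ missingColors G k c w ∪ (G.neighborFinset w).image (c s(w, ·)) := by
    intro γ hγ
    by_cases hmiss : γ ∈ missingColors G k c w
    · exact mem_union_left _ hmiss
    · obtain ⟨v, hv, hcv⟩ : ∃ v, G.Adj w v ∧ c s(w, v) = γ := by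
        simpa [mem_missingColors, hγ] using hmiss
      exact mem_union_right _ (mem_image.2 ⟨v, (mem_neighborFinset _ _ _).2 hv, hcv⟩)
  calc k = #(Icc 1 k) := by simp
    _ ≤ #(missingColors G k c w) + #((G.neighborFinset w).image (c s(w, ·))) :=
      (card_le_card hsub).trans (card_union_le _ _)
    _ ≤ #(missingColors G k c w) + G.degree w := by
      grw [card_image_le, card_neighborFinset_eq_degree]

theorem IsProperEdgeColoring.update_sup_edge [DecidableEq V] (hc : IsProperEdgeColoring H k c)
    (hx : α ∈ missingColors H k c x) (hu : α ∈ missingColors H k c u) :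
    IsProperEdgeColoring (H ⊔ edge x u) k (Function.update c s(x, u) α) := by
  have hH : ∀ {a b}, (H ⊔ edge x u).Adj a b → s(a, b) ≠ s(x, u) → H.Adj a b := by
    intro a b hab hne
    refine hab.resolve_right fun h => hne ?_
    rcases ((edge_adj _ _ _ _).1 h).1 with ⟨rfl, rfl⟩ | ⟨rfl, rfl⟩
    exacts [rfl, Sym2.eq_swap]
  have hmiss : ∀ {w a b}, s(w, a) = s(x, u) → H.Adj w b → c s(w, b) ≠ α := by
    intro w a b h hb
    have hw : w = x ∨ w = u := Sym2.mem_iff.1 (h ▸ Sym2.mem_mk_left w a)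
    rcases hw with rfl | rfl
    exacts [(mem_missingColors.1 hx).2 b hb, (mem_missingColors.1 hu).2 b hb]
  rw [isProperEdgeColoring_iff]
  refine ⟨fun a b hab => ?_, fun w a b ha hb hab => ?_⟩
  · by_cases he : s(a, b) = s(x, u)
    · rw [he, Function.update_self]
      exact (mem_missingColors.1 hx).1
    · rw [Function.update_of_ne he]
      exact hc.mem_Icc (hH hab he)
  · by_cases hea : s(w, a) = s(x, u) <;> by_cases heb : s(w, b) = s(x, u)
    · exact absurd (Sym2.congr_right.1 (hea.trans heb.symm)) hab
    · rw [hea, Function.update_self, Function.update_of_ne heb]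
      exact (hmiss hea (hH hb heb)).symm
    · rw [heb, Function.update_self, Function.update_of_ne hea]
      exact hmiss heb (hH ha hea)
    · rw [Function.update_of_ne hea, Function.update_of_ne heb]
      exact hc.ne_of_adj (hH ha hea) (hH hb heb) hab

theorem maxDegree_sub_degree_le_card_missingColors_deleteEdges [Fintype V] [DecidableRel G.Adj]
    (s : Set (Sym2 V)) :
    G.maxDegree - G.degree w ≤ #(missingColors (G.deleteEdges s) G.maxDegree c w) := by
  classical
  have := le_card_missingColors_add_degree (G := G.deleteEdges s) (k := G.maxDegree) (c := c)
    (w := w)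
  have := degree_le_of_le (v := w) (G.deleteEdges_le s)
  omega

theorem maxDegree_sub_degree_lt_card_missingColors_deleteEdges [Fintype V]
    [DecidableRel G.Adj] {e : Sym2 V} (he : e ∈ G.edgeSet) (hw : w ∈ e) :
    G.maxDegree - G.degree w < #(missingColors (G.deleteEdges {e}) G.maxDegree c w) := by
  classical
  have := le_card_missingColors_add_degree (G := G.deleteEdges {e}) (k := G.maxDegree) (c := c)
    (w := w)
  have := degree_deleteEdges_singleton_lt he hw
  have := G.degree_le_maxDegree w
  omega

end EdgeColoring

section FanChain

variable {H : SimpleGraph V} {k : ℕ} {c c' : Sym2 V → ℕ} {x y u z : V} {α : ℕ} {l t : List V}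

inductive IsFanChain (H : SimpleGraph V) (k : ℕ) (c : Sym2 V → ℕ) (x y : V) : List V → Prop
  | last : IsFanChain H k c x y [y]
  | cons {v w : V} {r : List V} : H.Adj x v → c s(x, v) ∈ missingColors H k c w →
      IsFanChain H k c x y (w :: r) → IsFanChain H k c x y (v :: w :: r)

theorem IsFanChain.ne_of_mem (hxy : x ≠ y) (h : IsFanChain H k c x y l) (hz : z ∈ l) :
    z ≠ x := by
  induction h with
  | last => exact (List.mem_singleton.1 hz).symm ▸ hxy.symm
  | cons hxv _ _ ih =>
    rcases List.mem_cons.1 hz with rfl | hz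
    exacts [hxv.ne', ih hz]

theorem IsFanChain.exists_suffix_of_mem (h : IsFanChain H k c x y l) (hz : z ∈ l) :
    ∃ t, z :: t <:+ l ∧ IsFanChain H k c x y (z :: t) := by
  induction h with
  | last =>
    obtain rfl := List.mem_singleton.1 hz
    exact ⟨[], List.suffix_refl _, .last⟩
  | cons hxv hmiss hrest ih =>
    rcases List.mem_cons.1 hz with rfl | hz
    · exact ⟨_, List.suffix_refl _, .cons hxv hmiss hrest⟩
    · obtain ⟨t, hs, ht⟩ := ih hz
      exact ⟨t, hs.trans (List.suffix_cons _ _), ht⟩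

theorem IsFanChain.transfer (h : IsFanChain H k c x y l)
    (hstep : ∀ v w r, v :: w :: r <:+ l → H.Adj x v → c s(x, v) ∈ missingColors H k c w →
      IsFanChain H k c x y (w :: r) → c' s(x, v) ∈ missingColors H k c' w) :
    IsFanChain H k c' x y l := by
  induction h with
  | last => exact .last
  | cons hxv hmiss hrest ih =>
    exact .cons hxv (hstep _ _ _ (List.suffix_refl _) hxv hmiss hrest)
      (ih fun v w r hs => hstep v w r (hs.trans (List.suffix_cons _ _)))

/-- Recolor `xu` with the common missing color; then the old color of `xu` is missing at `x` and
at the next vertex, and the rest of the chain is untouched. -/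
theorem IsFanChain.edgeColorable (hc : IsProperEdgeColoring H k c) (hxy : x ≠ y)
    (h : IsFanChain H k c x y (u :: t)) (hnd : (u :: t).Nodup)
    (hαx : α ∈ missingColors H k c x) (hαu : α ∈ missingColors H k c u) :
    EdgeColorable (H ⊔ edge x y) k := by
  classical
  induction t generalizing u c α with
  | nil =>
    cases h
    exact ⟨_, hc.update_sup_edge hαx hαu⟩
  | cons w r ih =>
    obtain _ | ⟨hxu, hγw, hrest⟩ := h
    set c' := Function.update c s(x, u) α with hc'_def
    have hc' : IsProperEdgeColoring H k c' := by
      simpa only [sup_edge_of_adj H hxu] using hc.update_sup_edge hαx hαu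
    have hfix : ∀ z ∈ w :: r, ∀ b, c' s(z, b) = c s(z, b) := by
      refine fun z hz b => Function.update_of_ne (fun he => ?_) _ _
      rcases Sym2.mem_iff.1 (he ▸ Sym2.mem_mk_left z b) with rfl | rfl
      exacts [hrest.ne_of_mem hxy hz rfl, (List.nodup_cons.1 hnd).1 hz]
    have hγx : c s(x, u) ∈ missingColors H k c' x := by
      refine mem_missingColors.2 ⟨hc.mem_Icc hxu, fun v hxv => ?_⟩
      by_cases hvu : v = u
      · subst hvu
        rw [hc'_def, Function.update_self]
        exact ((mem_missingColors.1 hαx).2 v hxu).symm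
      · rw [hc'_def, Function.update_of_ne (mt Sym2.congr_right.1 hvu)]
        exact hc.ne_of_adj hxv hxu hvu
    refine ih hc' (hrest.transfer fun v w' r' hs _ hmiss _ => ?_) (List.nodup_cons.1 hnd).2 hγx
      (by rwa [missingColors_congr (hfix w List.mem_cons_self)])
    rwa [Sym2.eq_swap, hfix v (hs.subset List.mem_cons_self), ← Sym2.eq_swap,
      missingColors_congr (hfix w' (hs.subset (by simp)))]

end FanChain

section Kempe

variable {H : SimpleGraph V} {k : ℕ} {c : Sym2 V → ℕ} {α β γ : ℕ} {u w a : V}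

def kempeGraph (H : SimpleGraph V) (c : Sym2 V → ℕ) (α β : ℕ) : SimpleGraph V where
  Adj a b := H.Adj a b ∧ (c s(a, b) = α ∨ c s(a, b) = β)
  symm := ⟨fun a b h => ⟨h.1.symm, by rw [Sym2.eq_swap]; exact h.2⟩⟩
  loopless := ⟨fun a h => H.loopless.irrefl a h.1⟩

open Classical in
/-- Swaps `α` and `β` on every edge meeting the `(α, β)`-Kempe chain through `u`; off the chain
this only touches edges of other colors, which it leaves unchanged. -/
noncomputable def kempeSwap (H : SimpleGraph V) (c : Sym2 V → ℕ) (α β : ℕ) (u : V) :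
    Sym2 V → ℕ := fun e =>
  if ∃ a ∈ e, (kempeGraph H c α β).Reachable u a then Equiv.swap α β (c e) else c e

theorem kempeSwap_apply_of_reachable (hw : (kempeGraph H c α β).Reachable u w) :
    kempeSwap H c α β u s(w, a) = Equiv.swap α β (c s(w, a)) := by
  classical
  exact if_pos ⟨w, Sym2.mem_mk_left w a, hw⟩

theorem kempeSwap_apply_of_not_reachable (hw : ¬(kempeGraph H c α β).Reachable u w)
    (ha : H.Adj w a) : kempeSwap H c α β u s(w, a) = c s(w, a) := by
  classical
  unfold kempeSwap
  split_ifs with h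
  · obtain ⟨b, hb, hub⟩ := h
    obtain rfl : b = a := (Sym2.mem_iff.1 hb).resolve_left fun h => hw (h ▸ hub)
    have hcol : c s(b, w) ≠ α ∧ c s(b, w) ≠ β := by
      by_contra! hcol
      exact hw (hub.trans (Adj.reachable ⟨ha.symm, or_iff_not_imp_left.2 hcol⟩))
    rw [Sym2.eq_swap] at hcol
    exact Equiv.swap_apply_of_ne_of_ne hcol.1 hcol.2
  · rfl

theorem IsProperEdgeColoring.kempeSwap (hc : IsProperEdgeColoring H k c) (hα : α ∈ Icc 1 k)
    (hβ : β ∈ Icc 1 k) : IsProperEdgeColoring H k (kempeSwap H c α β u) := by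
  rw [isProperEdgeColoring_iff]
  refine ⟨fun a b hab => ?_, fun w a b ha hb hab => ?_⟩
  · by_cases ha : (kempeGraph H c α β).Reachable u a
    · rw [kempeSwap_apply_of_reachable ha, Equiv.swap_apply_mem_iff hα hβ]
      exact hc.mem_Icc hab
    · rw [kempeSwap_apply_of_not_reachable ha hab]
      exact hc.mem_Icc hab
  · by_cases hw : (kempeGraph H c α β).Reachable u w
    · rw [kempeSwap_apply_of_reachable hw, kempeSwap_apply_of_reachable hw]
      exact (Equiv.injective _).ne (hc.ne_of_adj ha hb hab)
    · rw [kempeSwap_apply_of_not_reachable hw ha, kempeSwap_apply_of_not_reachable hw hb]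
      exact hc.ne_of_adj ha hb hab

theorem mem_missingColors_kempeSwap_of_reachable (hα : α ∈ Icc 1 k) (hβ : β ∈ Icc 1 k)
    (hw : (kempeGraph H c α β).Reachable u w) :
    γ ∈ missingColors H k (kempeSwap H c α β u) w ↔
      Equiv.swap α β γ ∈ missingColors H k c w := by
  simp only [mem_missingColors, kempeSwap_apply_of_reachable hw, Equiv.swap_apply_mem_iff hα hβ,
    Ne, Equiv.swap_apply_eq_iff]

theorem missingColors_kempeSwap_of_not_reachable (hw : ¬(kempeGraph H c α β).Reachable u w) :
    missingColors H k (kempeSwap H c α β u) w = missingColors H k c w := by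
  ext γ
  simp only [mem_missingColors]
  exact and_congr_right fun _ => forall₂_congr fun a ha => by
    rw [kempeSwap_apply_of_not_reachable hw ha]

theorem degree_kempeGraph_le (hc : IsProperEdgeColoring H k c) {T : Finset ℕ}
    (hT : ∀ a, (kempeGraph H c α β).Adj w a → c s(w, a) ∈ T)
    [Fintype ((kempeGraph H c α β).neighborSet w)] : (kempeGraph H c α β).degree w ≤ #T := by
  rw [← card_neighborFinset_eq_degree]
  refine card_le_card_of_injOn (c s(w, ·)) (fun a ha => hT a ((mem_neighborFinset ..).1 ha))
    fun a ha b hb hab => ?_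
  by_contra hne
  exact hc.ne_of_adj ((mem_neighborFinset ..).1 ha).1 ((mem_neighborFinset ..).1 hb).1 hne hab

end Kempe

section Fan

variable {H : SimpleGraph V} {k : ℕ} {c : Sym2 V → ℕ} {x y u v w : V} {α β : ℕ} {t : List V}

theorem not_adj_of_not_edgeColorable_sup_edge (hc : IsProperEdgeColoring H k c)
    (hnc : ¬EdgeColorable (H ⊔ edge x y) k) : ¬H.Adj x y := fun h =>
  hnc ⟨c, by rwa [sup_edge_of_adj H h]⟩

/-- Were `u` not joined to `x`, swapping `α` and `β` on the Kempe chain through `u` would make `α`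
missing at `u` and at `x` while keeping every link of the fan chain (by induction on its length). -/
theorem IsFanChain.reachable_kempeGraph (hc : IsProperEdgeColoring H k c) (hxy : x ≠ y)
    (hnc : ¬EdgeColorable (H ⊔ edge x y) k) (h : IsFanChain H k c x y (u :: t))
    (hnd : (u :: t).Nodup) (hαx : α ∈ missingColors H k c x)
    (hβu : β ∈ missingColors H k c u) : (kempeGraph H c α β).Reachable u x := by
  induction hn : t.length using Nat.strong_induction_on generalizing u t with
  | _ n ih =>
  by_contra hux
  have hα := (mem_missingColors.1 hαx).1
  have hβ := (mem_missingColors.1 hβu).1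
  have hαx' : α ∈ missingColors H k (kempeSwap H c α β u) x := by
    rwa [missingColors_kempeSwap_of_not_reachable hux]
  have hαu' : α ∈ missingColors H k (kempeSwap H c α β u) u := by
    rwa [mem_missingColors_kempeSwap_of_reachable hα hβ .rfl, Equiv.swap_apply_left]
  refine hnc (IsFanChain.edgeColorable (hc.kempeSwap hα hβ) hxy
    (h.transfer fun v w r hs hxv hmiss hrest => ?_) hnd hαx' hαu')
  rw [kempeSwap_apply_of_not_reachable hux hxv]
  by_cases hw : (kempeGraph H c α β).Reachable u w
  · rw [mem_missingColors_kempeSwap_of_reachable hα hβ hw]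
    have hnd' : (w :: r).Nodup := hnd.sublist ((List.suffix_cons v _).trans hs).sublist
    rcases eq_or_ne (c s(x, v)) α with hcα | hcα
    · exact absurd (hrest.edgeColorable hc hxy hnd' hαx (hcα ▸ hmiss)) hnc
    rcases eq_or_ne (c s(x, v)) β with hcβ | hcβ
    · have hlen := hs.length_le
      simp only [List.length_cons] at hlen
      exact absurd (hw.trans (ih r.length (by omega) hrest hnd' (hcβ ▸ hmiss) rfl)) hux
    · rwa [Equiv.swap_apply_of_ne_of_ne hcα hcβ]
  · rwa [missingColors_kempeSwap_of_not_reachable hw]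

theorem IsFanChain.disjoint_missingColors [Fintype V] (hc : IsProperEdgeColoring H k c)
    (hxy : x ≠ y) (hnc : ¬EdgeColorable (H ⊔ edge x y) k) {s : List V}
    (hu : IsFanChain H k c x y (u :: t)) (hndu : (u :: t).Nodup)
    (hw : IsFanChain H k c x y (w :: s)) (hndw : (w :: s).Nodup) (huw : u ≠ w)
    (hαx : α ∈ missingColors H k c x) :
    Disjoint (missingColors H k c u) (missingColors H k c w) := by
  classical
  refine disjoint_left.2 fun β hβu hβw => ?_
  have hdeg (v : V) : (kempeGraph H c α β).degree v ≤ 2 :=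
    (degree_kempeGraph_le hc (T := {α, β}) fun a ha => by
      rcases ha.2 with h | h <;> simp [h]).trans card_le_two
  have hdegx : (kempeGraph H c α β).degree x ≤ 1 :=
    degree_kempeGraph_le hc (T := {β}) fun a ha =>
      mem_singleton.2 (ha.2.resolve_left ((mem_missingColors.1 hαx).2 a ha.1))
  have hdegβ {v : V} (hv : β ∈ missingColors H k c v) : (kempeGraph H c α β).degree v ≤ 1 :=
    degree_kempeGraph_le hc (T := {α}) fun a ha =>
      mem_singleton.2 (ha.2.resolve_right ((mem_missingColors.1 hv).2 a ha.1))
  rcases Reachable.eq_or_eq_or_eq_of_degree_le_one hdeg hdegx (hdegβ hβu) (hdegβ hβw)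
    (hu.reachable_kempeGraph hc hxy hnc hndu hαx hβu).symm
    (hw.reachable_kempeGraph hc hxy hnc hndw hαx hβw).symm with h | h | h
  · exact hu.ne_of_mem hxy List.mem_cons_self h.symm
  · exact hw.ne_of_mem hxy List.mem_cons_self h.symm
  · exact huw h

variable [Fintype V]

open Classical in
noncomputable def fan (H : SimpleGraph V) (k : ℕ) (c : Sym2 V → ℕ) (x y : V) : Finset V :=
  univ.filter fun u => ∃ t, IsFanChain H k c x y (u :: t) ∧ (u :: t).Nodup

theorem mem_fan : u ∈ fan H k c x y ↔ ∃ t, IsFanChain H k c x y (u :: t) ∧ (u :: t).Nodup := by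
  classical
  simp only [fan, mem_filter, mem_univ, true_and]

theorem end_mem_fan : y ∈ fan H k c x y :=
  mem_fan.2 ⟨[], .last, List.nodup_singleton y⟩

theorem adj_of_mem_fan (hu : u ∈ fan H k c x y) (huy : u ≠ y) : H.Adj x u := by
  obtain ⟨t, h, -⟩ := mem_fan.1 hu
  cases h with
  | last => exact absurd rfl huy
  | cons hxu _ _ => exact hxu

theorem mem_fan_of_mem_missingColors (hu : u ∈ fan H k c x y) (hxv : H.Adj x v)
    (hv : c s(x, v) ∈ missingColors H k c u) : v ∈ fan H k c x y := by
  obtain ⟨t, h, hnd⟩ := mem_fan.1 hu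
  by_cases hvl : v ∈ u :: t
  · obtain ⟨t', hs, h'⟩ := h.exists_suffix_of_mem hvl
    exact mem_fan.2 ⟨t', h', hnd.sublist hs.sublist⟩
  · exact mem_fan.2 ⟨u :: t, .cons hxv hv h, List.nodup_cons.2 ⟨hvl, hnd⟩⟩

/-- The missing colors at fan vertices are pairwise disjoint, and each is the color of an edge from
`x` to a fan vertex other than `y`. -/
theorem sum_card_missingColors_fan_le [DecidableEq V] (hc : IsProperEdgeColoring H k c)
    (hxy : x ≠ y) (hnc : ¬EdgeColorable (H ⊔ edge x y) k) (hα : α ∈ missingColors H k c x) :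
    ∑ u ∈ fan H k c x y, #(missingColors H k c u) ≤ #((fan H k c x y).erase y) := by
  have hdisj : (fan H k c x y : Set V).PairwiseDisjoint (missingColors H k c) := by
    intro u hu w hw huw
    obtain ⟨t, hu, hndu⟩ := mem_fan.1 hu
    obtain ⟨s, hw, hndw⟩ := mem_fan.1 hw
    exact hu.disjoint_missingColors hc hxy hnc hndu hw hndw huw hα
  rw [← card_biUnion hdisj]
  refine (card_le_card fun γ hγ => ?_).trans (card_image_le (f := (c s(x, ·))))
  obtain ⟨u, hu, hγu⟩ := mem_biUnion.1 hγ
  obtain ⟨t, h, hnd⟩ := mem_fan.1 hu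
  have hγx : γ ∉ missingColors H k c x := fun hγx => hnc (h.edgeColorable hc hxy hnd hγx hγu)
  obtain ⟨v, hxv, rfl⟩ : ∃ v, H.Adj x v ∧ c s(x, v) = γ := by
    simpa [mem_missingColors, (mem_missingColors.1 hγu).1] using hγx
  refine mem_image.2 ⟨v, mem_erase.2 ⟨?_, mem_fan_of_mem_missingColors hu hxv hγu⟩, rfl⟩
  rintro rfl
  exact not_adj_of_not_edgeColorable_sup_edge hc hnc hxv

end Fan

end

/-- Vizing's Adjacency Lemma: if `G` is Class 2 and `xy` is a critical edge,
then `x` has at least `Δ − d_G(y) + 1` neighbors of degree `Δ` other than `y`. -/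
theorem stmt_5 {V : Type*} [Fintype V] (G : SimpleGraph V) [DecidableRel G.Adj]
    (hclass2 : chromIndex G = G.maxDegree + 1) (x y : V) (hxy : G.Adj x y)
    (hcrit : chromIndex (G.deleteEdges {s(x, y)}) < chromIndex G) :
    G.maxDegree - G.degree y + 1 ≤
      {z | G.Adj x z ∧ z ≠ y ∧ G.degree z = G.maxDegree}.ncard := by
  classical
  set Δ := G.maxDegree
  set H := G.deleteEdges {s(x, y)}
  obtain ⟨c, hc⟩ : EdgeColorable H Δ := (edgeColorable_chromIndex H).mono (by omega)
  have hnc : ¬EdgeColorable (H ⊔ edge x y) Δ := fun h =>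
    absurd (chromIndex_le (h.anti (G.le_deleteEdges_sup_edge x y))) (by omega)
  obtain ⟨α, hα⟩ : (missingColors H Δ c x).Nonempty := Finset.card_pos.1 (Nat.zero_lt_of_lt
    (maxDegree_sub_degree_lt_card_missingColors_deleteEdges hxy (Sym2.mem_mk_left x y)))
  have hsum := sum_card_missingColors_fan_le hc hxy.ne hnc hα
  rw [← Finset.add_sum_erase _ _ end_mem_fan] at hsum
  refine (Finset.le_card_filter_of_add_sum_le (p := (G.degree · = Δ)) (Nat.add_le_add_right
    (maxDegree_sub_degree_lt_card_missingColors_deleteEdges hxy (Sym2.mem_mk_right x y)) _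
    |>.trans hsum) fun u _ hu => ?_).trans ?_
  · have : Δ - G.degree u ≤ (missingColors H Δ c u).card :=
      maxDegree_sub_degree_le_card_missingColors_deleteEdges _
    have := G.degree_le_maxDegree u
    omega
  rw [← Set.ncard_coe_finset]
  refine Set.ncard_le_ncard (fun z hz => ?_) (Set.toFinite _)
  obtain ⟨⟨hzy, hz⟩, hzΔ⟩ := by simpa only [Finset.coe_filter, Finset.mem_erase] using hz
  exact ⟨G.deleteEdges_le _ (adj_of_mem_fan hz hzy), hzy, hzΔ⟩
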